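/- Let u^s(t,z) be a smooth function with ∂_z u^s > 0, and let (u_k, v_k) solve the linear system ∂_t u_k + u^s ∂_x u_k − ∂_z² u_k + ik v^s u_k − ∂_z u^s · ∫₀^z (∂_x u_k + ik v_k) dz̃ = 0 (and similarly for v_k with ∂_z v^s in place of ∂_z u^s), with u_k|_{z=0} = v_k|_{z=0} = 0. Define h_k = ∂_z(u_k / ∂_z u^s) and ṽ_k = v_k − (∂_z v^s/∂_z u^s) u_k. Then, using ∂_t u^s = ∂_z² u^s and ∂_t v^s = ∂_z² v^s, the pair (h_k, ṽ_k) satisfies: ∂_t h_k + u^s ∂_x h_k − ∂_z² h_k − 2∂_z((∂_z²u^s/∂_z u^s) h_k) + ik(v^s h_k − ṽ_k) = 0 and ∂_t ṽ_k + u^s ∂_x ṽ_k − ∂_z² ṽ_k + ik v^s ṽ_k − 2 ∂_z u^s · ∂_z(∂_z v^s/∂_z u^s) · h_k = 0. -/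

import Mathlib

noncomputable section MWaux

abbrev E3 : Type := ℝ × ℝ × ℝ

def pd (v : E3) (f : E3 → ℂ) : E3 → ℂ := fun p => fderiv ℝ f p v

def e1 : E3 := (1, 0, 0)
def e2 : E3 := (0, 1, 0)
def e3 : E3 := (0, 0, 1)

theorem pd_contDiff {f : E3 → ℂ} (hf : ContDiff ℝ (⊤ : ℕ∞) f) (v : E3) :
    ContDiff ℝ (⊤ : ℕ∞) (pd v f) :=
  (hf.fderiv_right (le_refl _)).clm_apply contDiff_const

theorem pd_diff {f : E3 → ℂ} (hf : ContDiff ℝ (⊤ : ℕ∞) f) (v : E3) :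
    Differentiable ℝ (pd v f) :=
  (pd_contDiff hf v).differentiable (by simp)

theorem pd_add {f g : E3 → ℂ} {p : E3} (hf : DifferentiableAt ℝ f p)
    (hg : DifferentiableAt ℝ g p) (v : E3) :
    pd v (fun q => f q + g q) p = pd v f p + pd v g p := by
  simp [pd, fderiv_fun_add hf hg]

theorem pd_sub {f g : E3 → ℂ} {p : E3} (hf : DifferentiableAt ℝ f p)
    (hg : DifferentiableAt ℝ g p) (v : E3) :
    pd v (fun q => f q - g q) p = pd v f p - pd v g p := by
  simp [pd, fderiv_fun_sub hf hg]

theorem pd_mul {f g : E3 → ℂ} {p : E3} (hf : DifferentiableAt ℝ f p)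
    (hg : DifferentiableAt ℝ g p) (v : E3) :
    pd v (fun q => f q * g q) p = pd v f p * g p + f p * pd v g p := by
  simp [pd, fderiv_fun_mul hf hg, mul_comm]
  ring

theorem pd_const_mul {f : E3 → ℂ} {p : E3} (hf : DifferentiableAt ℝ f p)
    (c : ℂ) (v : E3) :
    pd v (fun q => c * f q) p = c * pd v f p := by
  simp [pd, fderiv_const_mul hf c]

theorem pd_comm {f : E3 → ℂ} (hf : ContDiff ℝ (⊤ : ℕ∞) f) (v w : E3) (p : E3) :
    pd v (pd w f) p = pd w (pd v f) p := by
  have hsym : IsSymmSndFDerivAt ℝ f p := by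
    have := hf.contDiffAt (x := p)
    exact (this.of_le (WithTop.coe_le_coe.mpr le_top)).isSymmSndFDerivAt (n := (2:ℕ)) (by norm_num)
  have hdf : Differentiable ℝ (fderiv ℝ f) :=
    (hf.fderiv_right (m := (⊤ : ℕ∞)) (le_refl _)).differentiable (by simp)
  have key : ∀ a b : E3, pd a (pd b f) p = fderiv ℝ (fderiv ℝ f) p a b := by
    intro a b
    have : pd b f = fun q => (fderiv ℝ f q) b := rfl
    rw [this]
    show fderiv ℝ (fun q => (fderiv ℝ f q) b) p a = _
    rw [fderiv_clm_apply (hdf p) (differentiableAt_const _)]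
    simp
  rw [key, key]
  exact hsym v w





theorem pd_zero (v : E3) (p : E3) : pd v (fun _ => (0:ℂ)) p = 0 := by
  simp [pd]

theorem hasDerivAt_p1 {f : E3 → ℂ} {t x z : ℝ} (hf : DifferentiableAt ℝ f (t,x,z)) :
    HasDerivAt (fun t' => f (t',x,z)) (pd e1 f (t,x,z)) t := by
  have hline : HasDerivAt (fun t' : ℝ => ((t',x,z) : E3)) e1 t :=
    (hasDerivAt_id t).prodMk (hasDerivAt_const t ((x,z) : ℝ × ℝ))
  exact hf.hasFDerivAt.comp_hasDerivAt t hline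

theorem hasDerivAt_p2 {f : E3 → ℂ} {t x z : ℝ} (hf : DifferentiableAt ℝ f (t,x,z)) :
    HasDerivAt (fun x' => f (t,x',z)) (pd e2 f (t,x,z)) x := by
  have hline : HasDerivAt (fun x' : ℝ => ((t,x',z) : E3)) e2 x :=
    (hasDerivAt_const x t).prodMk ((hasDerivAt_id x).prodMk (hasDerivAt_const x z))
  exact hf.hasFDerivAt.comp_hasDerivAt x hline

theorem hasDerivAt_p3 {f : E3 → ℂ} {t x z : ℝ} (hf : DifferentiableAt ℝ f (t,x,z)) :
    HasDerivAt (fun z' => f (t,x,z')) (pd e3 f (t,x,z)) z := by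
  have hline : HasDerivAt (fun z' : ℝ => ((t,x,z') : E3)) e3 z :=
    (hasDerivAt_const z t).prodMk ((hasDerivAt_const z x).prodMk (hasDerivAt_id z))
  exact hf.hasFDerivAt.comp_hasDerivAt z hline

theorem deriv_p1 {f : E3 → ℂ} {t x z : ℝ} (hf : DifferentiableAt ℝ f (t,x,z)) :
    deriv (fun t' => f (t',x,z)) t = pd e1 f (t,x,z) := (hasDerivAt_p1 hf).deriv

theorem deriv_p2 {f : E3 → ℂ} {t x z : ℝ} (hf : DifferentiableAt ℝ f (t,x,z)) :
    deriv (fun x' => f (t,x',z)) x = pd e2 f (t,x,z) := (hasDerivAt_p2 hf).deriv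

theorem deriv_p3 {f : E3 → ℂ} {t x z : ℝ} (hf : DifferentiableAt ℝ f (t,x,z)) :
    deriv (fun z' => f (t,x,z')) z = pd e3 f (t,x,z) := (hasDerivAt_p3 hf).deriv

/-- Cast bridge: if `g` is the complexification of `f` and `g`-curried has derivative `c`,
then `c` equals the cast of `deriv f`. -/
theorem ofReal_deriv_of_eq {f : ℝ → ℝ} {g : ℝ → ℂ} {z : ℝ} {c : ℂ}
    (hfg : ∀ y, ((f y : ℝ) : ℂ) = g y) (hg : HasDerivAt g c z) :
    ((deriv f z : ℝ) : ℂ) = c := by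
  have hre : HasDerivAt f c.re z := by
    have h2 : HasDerivAt (fun y => (g y).re) (Complex.reCLM c) z :=
      Complex.reCLM.hasFDerivAt.comp_hasDerivAt z hg
    have : (fun y => (g y).re) = f := by
      funext y; rw [← hfg y]; simp
    rwa [this] at h2
  have h3 : HasDerivAt g ((c.re : ℝ) : ℂ) z := by
    have := hre.ofReal_comp
    have he : (fun y : ℝ => ((f y : ℝ) : ℂ)) = g := funext hfg
    rwa [he] at this
  have hc : ((c.re : ℝ) : ℂ) = c := h3.unique hg
  rw [hre.deriv, hc]

theorem contDiff_div' {f g : E3 → ℂ} (hf : ContDiff ℝ (⊤ : ℕ∞) f) (hg : ContDiff ℝ (⊤ : ℕ∞) g)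
    (h0 : ∀ x, g x ≠ 0) : ContDiff ℝ (⊤ : ℕ∞) fun x => f x / g x := by
  simpa only [div_eq_mul_inv] using hf.mul (hg.fun_inv h0)

theorem key (k : ℂ) (U V S W Int : E3 → ℂ)
    (hU : ContDiff ℝ (⊤ : ℕ∞) U) (hV : ContDiff ℝ (⊤ : ℕ∞) V)
    (hS : ContDiff ℝ (⊤ : ℕ∞) S) (hW : ContDiff ℝ (⊤ : ℕ∞) W)
    (A B G H C Vt : E3 → ℂ)
    (hA : A = pd e3 S) (hB : B = pd e3 W)
    (hA0 : ∀ p, A p ≠ 0)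
    (hG : G = fun p => U p / A p) (hH : H = pd e3 G)
    (hC : C = fun p => B p / A p) (hVt : Vt = fun p => V p - C p * U p)
    (hSx : ∀ p, pd e2 S p = 0) (hWx : ∀ p, pd e2 W p = 0)
    (hSheat : ∀ p, pd e1 S p = pd e3 (pd e3 S) p)
    (hWheat : ∀ p, pd e1 W p = pd e3 (pd e3 W) p)
    (hEq1 : ∀ p, pd e1 U p + S p * pd e2 U p - pd e3 (pd e3 U) p
      + k * W p * U p - A p * Int p = 0)
    (hEq2 : ∀ p, pd e1 V p + S p * pd e2 V p - pd e3 (pd e3 V) p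
      + k * W p * V p - B p * Int p = 0)
    (hIz : ∀ t x z : ℝ, HasDerivAt (fun z' => Int (t,x,z'))
      (pd e2 U (t,x,z) + k * V (t,x,z)) z)
    (p : E3) :
    (pd e1 H p + S p * pd e2 H p - pd e3 (pd e3 H) p
      - 2 * pd e3 (fun q => pd e3 A q / A q * H q) p
      + k * (W p * H p - Vt p) = 0) ∧
    (pd e1 Vt p + S p * pd e2 Vt p - pd e3 (pd e3 Vt) p + k * W p * Vt p
      - 2 * A p * pd e3 C p * H p = 0) := by
  have D : ∀ {f : E3 → ℂ}, ContDiff ℝ (⊤ : ℕ∞) f → ∀ q : E3, DifferentiableAt ℝ f q :=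
    fun h q => h.differentiable (by simp) q
  -- smoothness
  have hAc : ContDiff ℝ (⊤ : ℕ∞) A := hA ▸ pd_contDiff hS e3
  have hBc : ContDiff ℝ (⊤ : ℕ∞) B := hB ▸ pd_contDiff hW e3
  have hGc : ContDiff ℝ (⊤ : ℕ∞) G := by rw [hG]; exact contDiff_div' hU hAc hA0
  have hHc : ContDiff ℝ (⊤ : ℕ∞) H := hH ▸ pd_contDiff hGc e3
  have hCc : ContDiff ℝ (⊤ : ℕ∞) C := by rw [hC]; exact contDiff_div' hBc hAc hA0
  have hVtc : ContDiff ℝ (⊤ : ℕ∞) Vt := by rw [hVt]; exact hV.sub (hCc.mul hU)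
  -- algebraic identities
  have hUAG : U = fun q => A q * G q := by
    funext q; rw [hG]; field_simp [hA0 q]
  have hBCA : B = fun q => C q * A q := by
    funext q; rw [hC]; field_simp [hA0 q]
  -- heat equations for A and B
  have heatA : ∀ q, pd e1 A q = pd e3 (pd e3 A) q := by
    intro q
    rw [hA, pd_comm hS e1 e3, show pd e1 S = pd e3 (pd e3 S) from funext hSheat]
  have heatB : ∀ q, pd e1 B q = pd e3 (pd e3 B) q := by
    intro q
    rw [hB, pd_comm hW e1 e3, show pd e1 W = pd e3 (pd e3 W) from funext hWheat]
  have pdA2 : ∀ q, pd e2 A q = 0 := by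
    intro q
    rw [hA, pd_comm hS e2 e3, show pd e2 S = fun _ => (0:ℂ) from funext hSx, pd_zero]
  have pdB2 : ∀ q, pd e2 B q = 0 := by
    intro q
    rw [hB, pd_comm hW e2 e3, show pd e2 W = fun _ => (0:ℂ) from funext hWx, pd_zero]
  -- derivatives of U = A*G
  have pdU : ∀ (v : E3) (q : E3), pd v U q = pd v A q * G q + A q * pd v G q := by
    intro v q
    conv_lhs => rw [hUAG]
    exact pd_mul (D hAc q) (D hGc q) v
  have pdU3f : pd e3 U = fun q => pd e3 A q * G q + A q * H q := by
    funext q; rw [pdU e3 q, hH]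
  have pdU33 : ∀ q, pd e3 (pd e3 U) q
      = pd e3 (pd e3 A) q * G q + 2 * (pd e3 A q * H q) + A q * pd e3 H q := by
    intro q
    rw [pdU3f,
      pd_add ((pd_diff hAc e3 q).fun_mul (D hGc q)) ((D hAc q).fun_mul (D hHc q)),
      pd_mul (pd_diff hAc e3 q) (D hGc q), pd_mul (D hAc q) (D hHc q), ← hH]
    ring
  -- derivatives of B = C*A
  have pdB : ∀ (v : E3) (q : E3), pd v B q = pd v C q * A q + C q * pd v A q := by
    intro v q
    conv_lhs => rw [hBCA]
    exact pd_mul (D hCc q) (D hAc q) v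
  have pdB3f : pd e3 B = fun q => pd e3 C q * A q + C q * pd e3 A q := funext (pdB e3)
  have pdB33 : ∀ q, pd e3 (pd e3 B) q
      = pd e3 (pd e3 C) q * A q + 2 * (pd e3 C q * pd e3 A q) + C q * pd e3 (pd e3 A) q := by
    intro q
    rw [pdB3f,
      pd_add ((pd_diff hCc e3 q).fun_mul (D hAc q)) ((D hCc q).fun_mul (pd_diff hAc e3 q)),
      pd_mul (pd_diff hCc e3 q) (D hAc q), pd_mul (D hCc q) (pd_diff hAc e3 q)]
    ring
  have hch : ∀ q, pd e1 C q * A q = pd e3 (pd e3 C) q * A q + 2 * (pd e3 C q * pd e3 A q) := by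
    intro q
    have h1 := pdB e1 q
    rw [heatB q, pdB33 q, heatA q] at h1
    linear_combination -h1
  have pdC2 : ∀ q, pd e2 C q = 0 := by
    intro q
    have h1 := pdB e2 q
    rw [pdB2 q, pdA2 q] at h1
    have h2 : pd e2 C q * A q = 0 := by linear_combination -h1
    exact (mul_eq_zero.mp h2).resolve_right (hA0 q)
  -- derivatives of Vt = V - C*U
  have pdVt : ∀ (v : E3) (q : E3),
      pd v Vt q = pd v V q - (pd v C q * U q + C q * pd v U q) := by
    intro v q
    rw [hVt, pd_sub (D hV q) ((D hCc q).fun_mul (D hU q)), pd_mul (D hCc q) (D hU q)]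
  have pdVt3f : pd e3 Vt = fun q => pd e3 V q - (pd e3 C q * U q + C q * pd e3 U q) :=
    funext (pdVt e3)
  have pdVt33 : ∀ q, pd e3 (pd e3 Vt) q = pd e3 (pd e3 V) q
      - (pd e3 (pd e3 C) q * U q + 2 * (pd e3 C q * pd e3 U q) + C q * pd e3 (pd e3 U) q) := by
    intro q
    rw [pdVt3f,
      pd_sub (pd_diff hV e3 q)
        (((pd_diff hCc e3 q).fun_mul (D hU q)).fun_add ((D hCc q).fun_mul (pd_diff hU e3 q))),
      pd_add ((pd_diff hCc e3 q).fun_mul (D hU q)) ((D hCc q).fun_mul (pd_diff hU e3 q)),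
      pd_mul (pd_diff hCc e3 q) (D hU q), pd_mul (D hCc q) (pd_diff hU e3 q)]
    ring
  -- Step A : the equation for G
  have hPhi : ∀ q, pd e1 G q + S q * pd e2 G q - pd e3 H q + k * W q * G q
      - 2 * (pd e3 A q / A q * H q) = Int q := by
    intro q
    have h1 := hEq1 q
    rw [pdU e1 q, pdU e2 q, pdU33 q, heatA q, pdA2 q,
      show U q = A q * G q from by rw [hUAG]] at h1
    field_simp [hA0 q]
    linear_combination h1
  obtain ⟨t, x, z⟩ := p
  -- Step B : differentiate Step A in z
  have hQHc : ContDiff ℝ (⊤ : ℕ∞) (fun q : E3 => pd e3 A q / A q * H q) :=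
    (contDiff_div' (pd_contDiff hAc e3) hAc hA0).mul hHc
  have hPhic : ContDiff ℝ (⊤ : ℕ∞) (fun q : E3 => pd e1 G q + S q * pd e2 G q - pd e3 H q
      + k * W q * G q - 2 * (pd e3 A q / A q * H q)) :=
    ((((pd_contDiff hGc e1).add (hS.mul (pd_contDiff hGc e2))).sub
      (pd_contDiff hHc e3)).add ((contDiff_const.mul hW).mul hGc)).sub
      (contDiff_const.mul hQHc)
  have hstepB : pd e3 (fun q : E3 => pd e1 G q + S q * pd e2 G q - pd e3 H q
      + k * W q * G q - 2 * (pd e3 A q / A q * H q)) (t,x,z)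
      = pd e2 U (t,x,z) + k * V (t,x,z) := by
    have hd1 := hasDerivAt_p3 (t := t) (x := x) (z := z) (D hPhic (t,x,z))
    have heq : (fun z' => (fun q : E3 => pd e1 G q + S q * pd e2 G q - pd e3 H q
        + k * W q * G q - 2 * (pd e3 A q / A q * H q)) (t,x,z'))
        = fun z' => Int (t,x,z') := funext fun z' => hPhi (t,x,z')
    rw [heq] at hd1
    exact hd1.unique (hIz t x z)
  have hexp : pd e3 (fun q : E3 => pd e1 G q + S q * pd e2 G q - pd e3 H q
      + k * W q * G q - 2 * (pd e3 A q / A q * H q)) (t,x,z)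
      = pd e1 H (t,x,z) + (A (t,x,z) * pd e2 G (t,x,z) + S (t,x,z) * pd e2 H (t,x,z))
        - pd e3 (pd e3 H) (t,x,z)
        + k * (pd e3 W (t,x,z) * G (t,x,z) + W (t,x,z) * H (t,x,z))
        - 2 * pd e3 (fun q => pd e3 A q / A q * H q) (t,x,z) := by
    set q : E3 := (t,x,z) with hq
    have Da : DifferentiableAt ℝ (fun q : E3 => pd e1 G q) q := pd_diff hGc e1 q
    have Db : DifferentiableAt ℝ (fun q : E3 => S q * pd e2 G q) q :=
      (D hS q).mul (pd_diff hGc e2 q)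
    have Dc : DifferentiableAt ℝ (fun q : E3 => pd e3 H q) q := pd_diff hHc e3 q
    have Dd : DifferentiableAt ℝ (fun q : E3 => k * W q * G q) q :=
      ((differentiableAt_const k).mul (D hW q)).mul (D hGc q)
    have De : DifferentiableAt ℝ (fun q : E3 => 2 * (pd e3 A q / A q * H q)) q :=
      (differentiableAt_const 2).mul (D hQHc q)
    rw [pd_sub ((Da.fun_add Db).fun_sub Dc |>.fun_add Dd) De,
      pd_add ((Da.fun_add Db).fun_sub Dc) Dd,
      pd_sub (Da.fun_add Db) Dc,
      pd_add Da Db,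
      pd_mul (D hS q) (pd_diff hGc e2 q),
      pd_mul ((differentiableAt_const k).fun_mul (D hW q)) (D hGc q),
      pd_const_mul (D hW q) k,
      pd_const_mul (D hQHc q) 2,
      pd_comm hGc e3 e1 q, pd_comm hGc e3 e2 q, ← hH, ← hA]
    ring
  constructor
  · -- first equation
    have hmain := hexp.symm.trans hstepB
    have h2 : pd e2 U (t,x,z) = A (t,x,z) * pd e2 G (t,x,z) := by
      rw [pdU e2 (t,x,z), pdA2 (t,x,z)]; ring
    have hCU : C (t,x,z) * U (t,x,z) = pd e3 W (t,x,z) * G (t,x,z) := by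
      rw [hC, hB, show U (t,x,z) = A (t,x,z) * G (t,x,z) from by rw [hUAG]]
      field_simp [hA0 (t,x,z)]
    rw [show Vt (t,x,z) = V (t,x,z) - C (t,x,z) * U (t,x,z) from by rw [hVt]]
    linear_combination hmain + h2 + k * hCU
  · -- second equation
    have e2V := hEq2 (t,x,z)
    have e2U := hEq1 (t,x,z)
    have hBq : B (t,x,z) = C (t,x,z) * A (t,x,z) := by rw [hBCA]
    have hUq : U (t,x,z) = A (t,x,z) * G (t,x,z) := by rw [hUAG]
    have hAH : pd e3 U (t,x,z) = pd e3 A (t,x,z) * G (t,x,z) + A (t,x,z) * H (t,x,z) := by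
      rw [pdU e3 (t,x,z), ← hH]
    rw [pdVt e1 (t,x,z), pdVt e2 (t,x,z), pdVt33 (t,x,z), pdC2 (t,x,z),
      show Vt (t,x,z) = V (t,x,z) - C (t,x,z) * U (t,x,z) from by rw [hVt]]
    linear_combination e2V - C (t,x,z) * e2U + Int (t,x,z) * hBq
      + (pd e3 (pd e3 C) (t,x,z) - pd e1 C (t,x,z)) * hUq
      + 2 * pd e3 C (t,x,z) * hAH - G (t,x,z) * hch (t,x,z)

/-- The Masmoudi–Wong-type substitution `h_k = ∂_z(u_k/∂_z uˢ)`,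
`ṽ_k = v_k - (∂_z vˢ/∂_z uˢ) u_k` transforms the `k`-th Fourier mode (in `y`) of the
linearized 3-D Prandtl system into a system without the nonlocal integral term. -/
theorem stmt13 (us vs : ℝ → ℝ → ℝ)
    (hus : ContDiff ℝ (⊤ : ℕ∞) (fun p : ℝ × ℝ => us p.1 p.2))
    (hvs : ContDiff ℝ (⊤ : ℕ∞) (fun p : ℝ × ℝ => vs p.1 p.2))
    (hus_heat : ∀ t z : ℝ, deriv (fun t' => us t' z) t = deriv (deriv (us t)) z)
    (hvs_heat : ∀ t z : ℝ, deriv (fun t' => vs t' z) t = deriv (deriv (vs t)) z)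
    (hmono : ∀ t z : ℝ, 0 < deriv (us t) z)
    (k : ℤ)
    (uk vk : ℝ → ℝ → ℝ → ℂ)
    (huk : ContDiff ℝ (⊤ : ℕ∞) (fun p : ℝ × ℝ × ℝ => uk p.1 p.2.1 p.2.2))
    (hvk : ContDiff ℝ (⊤ : ℕ∞) (fun p : ℝ × ℝ × ℝ => vk p.1 p.2.1 p.2.2))
    (hbc : ∀ t x : ℝ, uk t x 0 = 0 ∧ vk t x 0 = 0)
    (heq1 : ∀ t x z : ℝ,
      deriv (fun t' => uk t' x z) t
      + ((us t z : ℝ) : ℂ) * deriv (fun x' => uk t x' z) x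
      - deriv (deriv (uk t x)) z
      + Complex.I * (k : ℂ) * ((vs t z : ℝ) : ℂ) * uk t x z
      - ((deriv (us t) z : ℝ) : ℂ) *
          ∫ zt in (0:ℝ)..z,
            (deriv (fun x' => uk t x' zt) x + Complex.I * (k : ℂ) * vk t x zt) = 0)
    (heq2 : ∀ t x z : ℝ,
      deriv (fun t' => vk t' x z) t
      + ((us t z : ℝ) : ℂ) * deriv (fun x' => vk t x' z) x
      - deriv (deriv (vk t x)) z
      + Complex.I * (k : ℂ) * ((vs t z : ℝ) : ℂ) * vk t x z
      - ((deriv (vs t) z : ℝ) : ℂ) *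
          ∫ zt in (0:ℝ)..z,
            (deriv (fun x' => uk t x' zt) x + Complex.I * (k : ℂ) * vk t x zt) = 0)
    (hk : ℝ → ℝ → ℝ → ℂ)
    (hhk : ∀ t x z : ℝ,
      hk t x z = deriv (fun z' => uk t x z' / ((deriv (us t) z' : ℝ) : ℂ)) z)
    (vt : ℝ → ℝ → ℝ → ℂ)
    (hvt : ∀ t x z : ℝ,
      vt t x z = vk t x z - ((deriv (vs t) z / deriv (us t) z : ℝ) : ℂ) * uk t x z) :
    ∀ t x z : ℝ,
      (deriv (fun t' => hk t' x z) t
        + ((us t z : ℝ) : ℂ) * deriv (fun x' => hk t x' z) x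
        - deriv (deriv (hk t x)) z
        - 2 * deriv (fun z' =>
            ((deriv (deriv (us t)) z' / deriv (us t) z' : ℝ) : ℂ) * hk t x z') z
        + Complex.I * (k : ℂ) * (((vs t z : ℝ) : ℂ) * hk t x z - vt t x z) = 0) ∧
      (deriv (fun t' => vt t' x z) t
        + ((us t z : ℝ) : ℂ) * deriv (fun x' => vt t x' z) x
        - deriv (deriv (vt t x)) z
        + Complex.I * (k : ℂ) * ((vs t z : ℝ) : ℂ) * vt t x z
        - 2 * ((deriv (us t) z : ℝ) : ℂ) *
            ((deriv (fun z' => deriv (vs t) z' / deriv (us t) z') z : ℝ) : ℂ) *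
            hk t x z = 0) := by
  intro t x z
  have Dc : ∀ {f : E3 → ℂ}, ContDiff ℝ (⊤ : ℕ∞) f → ∀ q : E3, DifferentiableAt ℝ f q :=
    fun h q => h.differentiable (by simp) q
  -- smoothness of the basic uncurried functions
  have hSc : ContDiff ℝ (⊤ : ℕ∞) (fun p : E3 => ((us p.1 p.2.2 : ℝ) : ℂ)) :=
    Complex.ofRealCLM.contDiff.comp (hus.comp (contDiff_fst.prodMk (contDiff_snd.comp contDiff_snd)))
  have hWc : ContDiff ℝ (⊤ : ℕ∞) (fun p : E3 => ((vs p.1 p.2.2 : ℝ) : ℂ)) :=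
    Complex.ofRealCLM.contDiff.comp (hvs.comp (contDiff_fst.prodMk (contDiff_snd.comp contDiff_snd)))
  -- cast bridges
  have br_us1 : ∀ t x z : ℝ, ((deriv (us t) z : ℝ) : ℂ) = pd e3 (fun p : E3 => ((us p.1 p.2.2 : ℝ) : ℂ)) (t,x,z) :=
    fun t x z => ofReal_deriv_of_eq (fun y => rfl) (hasDerivAt_p3 (Dc hSc (t,x,z)))
  have br_vs1 : ∀ t x z : ℝ, ((deriv (vs t) z : ℝ) : ℂ) = pd e3 (fun p : E3 => ((vs p.1 p.2.2 : ℝ) : ℂ)) (t,x,z) :=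
    fun t x z => ofReal_deriv_of_eq (fun y => rfl) (hasDerivAt_p3 (Dc hWc (t,x,z)))
  have br_us2 : ∀ t x z : ℝ, ((deriv (deriv (us t)) z : ℝ) : ℂ) = pd e3 (pd e3 (fun p : E3 => ((us p.1 p.2.2 : ℝ) : ℂ))) (t,x,z) :=
    fun t x z => ofReal_deriv_of_eq (fun y => br_us1 t x y)
      (hasDerivAt_p3 (Dc (pd_contDiff hSc e3) (t,x,z)))
  have br_vs2 : ∀ t x z : ℝ, ((deriv (deriv (vs t)) z : ℝ) : ℂ) = pd e3 (pd e3 (fun p : E3 => ((vs p.1 p.2.2 : ℝ) : ℂ))) (t,x,z) :=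
    fun t x z => ofReal_deriv_of_eq (fun y => br_vs1 t x y)
      (hasDerivAt_p3 (Dc (pd_contDiff hWc e3) (t,x,z)))
  have hA0 : ∀ p : E3, pd e3 (fun p : E3 => ((us p.1 p.2.2 : ℝ) : ℂ)) p ≠ 0 := by
    rintro ⟨t0, x0, z0⟩
    rw [← br_us1 t0 x0 z0]
    exact_mod_cast (hmono t0 z0).ne'
  -- more smoothness
  have hGGc : ContDiff ℝ (⊤ : ℕ∞) (fun p : E3 => uk p.1 p.2.1 p.2.2 / pd e3 (fun p : E3 => ((us p.1 p.2.2 : ℝ) : ℂ)) p) := contDiff_div' huk (pd_contDiff hSc e3) hA0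
  have hHHc : ContDiff ℝ (⊤ : ℕ∞) (pd e3 (fun p : E3 => uk p.1 p.2.1 p.2.2 / pd e3 (fun p : E3 => ((us p.1 p.2.2 : ℝ) : ℂ)) p)) := pd_contDiff hGGc e3
  have hCCc : ContDiff ℝ (⊤ : ℕ∞) (fun p : E3 => pd e3 (fun p : E3 => ((vs p.1 p.2.2 : ℝ) : ℂ)) p / pd e3 (fun p : E3 => ((us p.1 p.2.2 : ℝ) : ℂ)) p) :=
    contDiff_div' (pd_contDiff hWc e3) (pd_contDiff hSc e3) hA0
  have hVTc : ContDiff ℝ (⊤ : ℕ∞) (fun p : E3 => vk p.1 p.2.1 p.2.2 - pd e3 (fun p : E3 => ((vs p.1 p.2.2 : ℝ) : ℂ)) p / pd e3 (fun p : E3 => ((us p.1 p.2.2 : ℝ) : ℂ)) p * uk p.1 p.2.1 p.2.2) := hvk.sub (hCCc.mul huk)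
  have hQHc : ContDiff ℝ (⊤ : ℕ∞) (fun q : E3 => pd e3 (pd e3 (fun p : E3 => ((us p.1 p.2.2 : ℝ) : ℂ))) q / (pd e3 (fun p : E3 => ((us p.1 p.2.2 : ℝ) : ℂ))) q * (pd e3 (fun p : E3 => uk p.1 p.2.1 p.2.2 / pd e3 (fun p : E3 => ((us p.1 p.2.2 : ℝ) : ℂ)) p)) q) :=
    (contDiff_div' (pd_contDiff (pd_contDiff hSc e3) e3) (pd_contDiff hSc e3) hA0).mul hHHc
  -- x-independence and heat equations
  have hSx : ∀ p : E3, pd e2 (fun p : E3 => ((us p.1 p.2.2 : ℝ) : ℂ)) p = 0 := by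
    rintro ⟨t0, x0, z0⟩
    have h := deriv_p2 (Dc hSc (t0,x0,z0))
    have he : (fun x' : ℝ => (fun p : E3 => ((us p.1 p.2.2 : ℝ) : ℂ)) (t0,x',z0)) = fun _ : ℝ => ((us t0 z0 : ℝ) : ℂ) := rfl
    rw [← h, he, deriv_const]
  have hWx : ∀ p : E3, pd e2 (fun p : E3 => ((vs p.1 p.2.2 : ℝ) : ℂ)) p = 0 := by
    rintro ⟨t0, x0, z0⟩
    have h := deriv_p2 (Dc hWc (t0,x0,z0))
    have he : (fun x' : ℝ => (fun p : E3 => ((vs p.1 p.2.2 : ℝ) : ℂ)) (t0,x',z0)) = fun _ : ℝ => ((vs t0 z0 : ℝ) : ℂ) := rfl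
    rw [← h, he, deriv_const]
  have hSheat : ∀ p : E3, pd e1 (fun p : E3 => ((us p.1 p.2.2 : ℝ) : ℂ)) p = pd e3 (pd e3 (fun p : E3 => ((us p.1 p.2.2 : ℝ) : ℂ))) p := by
    rintro ⟨t0, x0, z0⟩
    have h1 : ((deriv (fun t' => us t' z0) t0 : ℝ) : ℂ) = pd e1 (fun p : E3 => ((us p.1 p.2.2 : ℝ) : ℂ)) (t0,x0,z0) :=
      ofReal_deriv_of_eq (fun y => rfl) (hasDerivAt_p1 (Dc hSc (t0,x0,z0)))
    rw [← h1, hus_heat t0 z0, br_us2 t0 x0 z0]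
  have hWheat : ∀ p : E3, pd e1 (fun p : E3 => ((vs p.1 p.2.2 : ℝ) : ℂ)) p = pd e3 (pd e3 (fun p : E3 => ((vs p.1 p.2.2 : ℝ) : ℂ))) p := by
    rintro ⟨t0, x0, z0⟩
    have h1 : ((deriv (fun t' => vs t' z0) t0 : ℝ) : ℂ) = pd e1 (fun p : E3 => ((vs p.1 p.2.2 : ℝ) : ℂ)) (t0,x0,z0) :=
      ofReal_deriv_of_eq (fun y => rfl) (hasDerivAt_p1 (Dc hWc (t0,x0,z0)))
    rw [← h1, hvs_heat t0 z0, br_vs2 t0 x0 z0]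
  -- the integral
  have hint : ∀ t x z : ℝ,
      (∫ zt in (0:ℝ)..z, (deriv (fun x' => uk t x' zt) x + Complex.I * (k:ℂ) * vk t x zt))
        = (fun p : E3 => ∫ zt in (0:ℝ)..p.2.2, (pd e2 (fun p : E3 => uk p.1 p.2.1 p.2.2) (p.1, p.2.1, zt) + Complex.I * (k:ℂ) * vk p.1 p.2.1 zt)) (t,x,z) := by
    intro t x z
    have h2 : (fun zt => deriv (fun x' => uk t x' zt) x + Complex.I * (k:ℂ) * vk t x zt)
        = fun zt => pd e2 (fun p : E3 => uk p.1 p.2.1 p.2.2) (t,x,zt) + Complex.I * (k:ℂ) * vk t x zt :=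
      funext fun zt => by
        rw [show deriv (fun x' => uk t x' zt) x = pd e2 (fun p : E3 => uk p.1 p.2.1 p.2.2) (t,x,zt) from
          deriv_p2 (Dc huk (t,x,zt))]
    show (∫ zt in (0:ℝ)..z, (deriv (fun x' => uk t x' zt) x + Complex.I * (k:ℂ) * vk t x zt))
        = ∫ zt in (0:ℝ)..z, (pd e2 (fun p : E3 => uk p.1 p.2.1 p.2.2) (t,x,zt) + Complex.I * (k:ℂ) * vk t x zt)
    rw [h2]
  have hIz : ∀ t x z : ℝ, HasDerivAt (fun z' => (fun p : E3 => ∫ zt in (0:ℝ)..p.2.2, (pd e2 (fun p : E3 => uk p.1 p.2.1 p.2.2) (p.1, p.2.1, zt) + Complex.I * (k:ℂ) * vk p.1 p.2.1 zt)) (t,x,z'))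
      (pd e2 (fun p : E3 => uk p.1 p.2.1 p.2.2) (t,x,z) + (Complex.I * (k : ℂ)) * (fun p : E3 => vk p.1 p.2.1 p.2.2) (t,x,z)) z := by
    intro t x z
    have c1 : Continuous fun zt : ℝ => ((t,x,zt) : E3) :=
      continuous_const.prodMk (continuous_const.prodMk continuous_id)
    have hgc : Continuous fun zt : ℝ => pd e2 (fun p : E3 => uk p.1 p.2.1 p.2.2) (t,x,zt) + Complex.I * (k:ℂ) * vk t x zt :=
      ((pd_contDiff huk e2).continuous.comp c1).add
        (continuous_const.mul (hvk.continuous.comp c1))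
    exact intervalIntegral.integral_hasDerivAt_right (hgc.intervalIntegrable 0 z)
      (hgc.stronglyMeasurableAtFilter _ _) hgc.continuousAt
  -- the two PDEs in pd form
  have hE1 : ∀ p : E3, pd e1 (fun p : E3 => uk p.1 p.2.1 p.2.2) p + (fun p : E3 => ((us p.1 p.2.2 : ℝ) : ℂ)) p * pd e2 (fun p : E3 => uk p.1 p.2.1 p.2.2) p - pd e3 (pd e3 (fun p : E3 => uk p.1 p.2.1 p.2.2)) p
      + (Complex.I * (k : ℂ)) * (fun p : E3 => ((vs p.1 p.2.2 : ℝ) : ℂ)) p * (fun p : E3 => uk p.1 p.2.1 p.2.2) p - (pd e3 (fun p : E3 => ((us p.1 p.2.2 : ℝ) : ℂ))) p * (fun p : E3 => ∫ zt in (0:ℝ)..p.2.2, (pd e2 (fun p : E3 => uk p.1 p.2.1 p.2.2) (p.1, p.2.1, zt) + Complex.I * (k:ℂ) * vk p.1 p.2.1 zt)) p = 0 := by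
    rintro ⟨t0, x0, z0⟩
    have h := heq1 t0 x0 z0
    rw [show deriv (fun t' => uk t' x0 z0) t0 = pd e1 (fun p : E3 => uk p.1 p.2.1 p.2.2) (t0,x0,z0) from
          deriv_p1 (Dc huk (t0,x0,z0)),
        show deriv (fun x' => uk t0 x' z0) x0 = pd e2 (fun p : E3 => uk p.1 p.2.1 p.2.2) (t0,x0,z0) from
          deriv_p2 (Dc huk (t0,x0,z0)),
        show uk t0 x0 = (fun z' => uk t0 x0 z') from rfl,
        show deriv (fun z' => uk t0 x0 z') = (fun z' => pd e3 (fun p : E3 => uk p.1 p.2.1 p.2.2) (t0,x0,z')) from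
          funext fun z' => deriv_p3 (Dc huk (t0,x0,z')),
        show deriv (fun z' => pd e3 (fun p : E3 => uk p.1 p.2.1 p.2.2) (t0,x0,z')) z0 = pd e3 (pd e3 (fun p : E3 => uk p.1 p.2.1 p.2.2)) (t0,x0,z0) from
          deriv_p3 (Dc (pd_contDiff huk e3) (t0,x0,z0)),
        br_us1 t0 x0 z0, hint t0 x0 z0] at h
    exact h
  have hE2 : ∀ p : E3, pd e1 (fun p : E3 => vk p.1 p.2.1 p.2.2) p + (fun p : E3 => ((us p.1 p.2.2 : ℝ) : ℂ)) p * pd e2 (fun p : E3 => vk p.1 p.2.1 p.2.2) p - pd e3 (pd e3 (fun p : E3 => vk p.1 p.2.1 p.2.2)) p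
      + (Complex.I * (k : ℂ)) * (fun p : E3 => ((vs p.1 p.2.2 : ℝ) : ℂ)) p * (fun p : E3 => vk p.1 p.2.1 p.2.2) p - (pd e3 (fun p : E3 => ((vs p.1 p.2.2 : ℝ) : ℂ))) p * (fun p : E3 => ∫ zt in (0:ℝ)..p.2.2, (pd e2 (fun p : E3 => uk p.1 p.2.1 p.2.2) (p.1, p.2.1, zt) + Complex.I * (k:ℂ) * vk p.1 p.2.1 zt)) p = 0 := by
    rintro ⟨t0, x0, z0⟩
    have h := heq2 t0 x0 z0
    rw [show deriv (fun t' => vk t' x0 z0) t0 = pd e1 (fun p : E3 => vk p.1 p.2.1 p.2.2) (t0,x0,z0) from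
          deriv_p1 (Dc hvk (t0,x0,z0)),
        show deriv (fun x' => vk t0 x' z0) x0 = pd e2 (fun p : E3 => vk p.1 p.2.1 p.2.2) (t0,x0,z0) from
          deriv_p2 (Dc hvk (t0,x0,z0)),
        show vk t0 x0 = (fun z' => vk t0 x0 z') from rfl,
        show deriv (fun z' => vk t0 x0 z') = (fun z' => pd e3 (fun p : E3 => vk p.1 p.2.1 p.2.2) (t0,x0,z')) from
          funext fun z' => deriv_p3 (Dc hvk (t0,x0,z')),
        show deriv (fun z' => pd e3 (fun p : E3 => vk p.1 p.2.1 p.2.2) (t0,x0,z')) z0 = pd e3 (pd e3 (fun p : E3 => vk p.1 p.2.1 p.2.2)) (t0,x0,z0) from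
          deriv_p3 (Dc (pd_contDiff hvk e3) (t0,x0,z0)),
        br_vs1 t0 x0 z0, hint t0 x0 z0] at h
    exact h
  -- bridges for hk and vt
  have hkH : ∀ t x z : ℝ, hk t x z = (pd e3 (fun p : E3 => uk p.1 p.2.1 p.2.2 / pd e3 (fun p : E3 => ((us p.1 p.2.2 : ℝ) : ℂ)) p)) (t,x,z) := by
    intro t x z
    rw [hhk t x z,
      show (fun z' => uk t x z' / ((deriv (us t) z' : ℝ) : ℂ)) = (fun z' => (fun p : E3 => uk p.1 p.2.1 p.2.2 / pd e3 (fun p : E3 => ((us p.1 p.2.2 : ℝ) : ℂ)) p) (t,x,z')) from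
        funext fun z' => by rw [br_us1 t x z'],
      show deriv (fun z' => (fun p : E3 => uk p.1 p.2.1 p.2.2 / pd e3 (fun p : E3 => ((us p.1 p.2.2 : ℝ) : ℂ)) p) (t,x,z')) z = pd e3 (fun p : E3 => uk p.1 p.2.1 p.2.2 / pd e3 (fun p : E3 => ((us p.1 p.2.2 : ℝ) : ℂ)) p) (t,x,z) from
        deriv_p3 (Dc hGGc (t,x,z))]
  have hvtVt : ∀ t x z : ℝ, vt t x z = (fun p : E3 => vk p.1 p.2.1 p.2.2 - pd e3 (fun p : E3 => ((vs p.1 p.2.2 : ℝ) : ℂ)) p / pd e3 (fun p : E3 => ((us p.1 p.2.2 : ℝ) : ℂ)) p * uk p.1 p.2.1 p.2.2) (t,x,z) := by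
    intro t x z
    rw [hvt t x z, Complex.ofReal_div, br_vs1 t x z, br_us1 t x z]
  have br_C : ∀ t x z : ℝ,
      ((deriv (fun z' => deriv (vs t) z' / deriv (us t) z') z : ℝ) : ℂ) = pd e3 (fun p : E3 => pd e3 (fun p : E3 => ((vs p.1 p.2.2 : ℝ) : ℂ)) p / pd e3 (fun p : E3 => ((us p.1 p.2.2 : ℝ) : ℂ)) p) (t,x,z) :=
    fun t x z => ofReal_deriv_of_eq
      (fun y => by rw [Complex.ofReal_div, br_vs1 t x y, br_us1 t x y])
      (hasDerivAt_p3 (Dc hCCc (t,x,z)))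
  -- invoke the key lemma
  have main := key (Complex.I * (k : ℂ)) (fun p : E3 => uk p.1 p.2.1 p.2.2) (fun p : E3 => vk p.1 p.2.1 p.2.2) (fun p : E3 => ((us p.1 p.2.2 : ℝ) : ℂ)) (fun p : E3 => ((vs p.1 p.2.2 : ℝ) : ℂ)) (fun p : E3 => ∫ zt in (0:ℝ)..p.2.2, (pd e2 (fun p : E3 => uk p.1 p.2.1 p.2.2) (p.1, p.2.1, zt) + Complex.I * (k:ℂ) * vk p.1 p.2.1 zt)) huk hvk hSc hWc
    (pd e3 (fun p : E3 => ((us p.1 p.2.2 : ℝ) : ℂ))) (pd e3 (fun p : E3 => ((vs p.1 p.2.2 : ℝ) : ℂ))) (fun p : E3 => uk p.1 p.2.1 p.2.2 / pd e3 (fun p : E3 => ((us p.1 p.2.2 : ℝ) : ℂ)) p) (pd e3 (fun p : E3 => uk p.1 p.2.1 p.2.2 / pd e3 (fun p : E3 => ((us p.1 p.2.2 : ℝ) : ℂ)) p)) (fun p : E3 => pd e3 (fun p : E3 => ((vs p.1 p.2.2 : ℝ) : ℂ)) p / pd e3 (fun p : E3 => ((us p.1 p.2.2 : ℝ) : ℂ))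 p) (fun p : E3 => vk p.1 p.2.1 p.2.2 - pd e3 (fun p : E3 => ((vs p.1 p.2.2 : ℝ) : ℂ)) p / pd e3 (fun p : E3 => ((us p.1 p.2.2 : ℝ) : ℂ)) p * uk p.1 p.2.1 p.2.2) rfl rfl hA0 rfl rfl rfl rfl
    hSx hWx hSheat hWheat hE1 hE2 hIz (t,x,z)
  refine ⟨?_, ?_⟩
  · rw [show (fun z' => ((deriv (deriv (us t)) z' / deriv (us t) z' : ℝ) : ℂ) * hk t x z')
          = (fun z' => pd e3 (pd e3 (fun p : E3 => ((us p.1 p.2.2 : ℝ) : ℂ))) (t,x,z') / (pd e3 (fun p : E3 => ((us p.1 p.2.2 : ℝ) : ℂ))) (t,x,z') * (pd e3 (fun p : E3 => uk p.1 p.2.1 p.2.2 / pd e3 (fun p : E3 => ((us p.1 p.2.2 : ℝ) : ℂ)) p)) (t,x,z')) from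
        funext fun z' => by
          rw [Complex.ofReal_div, br_us2 t x z', br_us1 t x z', hkH t x z'],
      show deriv (fun z' => pd e3 (pd e3 (fun p : E3 => ((us p.1 p.2.2 : ℝ) : ℂ))) (t,x,z') / (pd e3 (fun p : E3 => ((us p.1 p.2.2 : ℝ) : ℂ))) (t,x,z') * (pd e3 (fun p : E3 => uk p.1 p.2.1 p.2.2 / pd e3 (fun p : E3 => ((us p.1 p.2.2 : ℝ) : ℂ)) p)) (t,x,z')) z
          = pd e3 (fun q : E3 => pd e3 (pd e3 (fun p : E3 => ((us p.1 p.2.2 : ℝ) : ℂ))) q / (pd e3 (fun p : E3 => ((us p.1 p.2.2 : ℝ) : ℂ))) q * (pd e3 (fun p : E3 => uk p.1 p.2.1 p.2.2 / pd e3 (fun p : E3 => ((us p.1 p.2.2 : ℝ) : ℂ)) p)) q) (t,x,z) from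
        deriv_p3 (Dc hQHc (t,x,z)),
      hkH t x z,
      show hk t x = (fun z' => (pd e3 (fun p : E3 => uk p.1 p.2.1 p.2.2 / pd e3 (fun p : E3 => ((us p.1 p.2.2 : ℝ) : ℂ)) p)) (t,x,z')) from funext fun z' => hkH t x z',
      show deriv (fun z' => (pd e3 (fun p : E3 => uk p.1 p.2.1 p.2.2 / pd e3 (fun p : E3 => ((us p.1 p.2.2 : ℝ) : ℂ)) p)) (t,x,z')) = (fun z'' => pd e3 (pd e3 (fun p : E3 => uk p.1 p.2.1 p.2.2 / pd e3 (fun p : E3 => ((us p.1 p.2.2 : ℝ) : ℂ)) p)) (t,x,z'')) from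
        funext fun z'' => deriv_p3 (Dc hHHc (t,x,z'')),
      show deriv (fun z'' => pd e3 (pd e3 (fun p : E3 => uk p.1 p.2.1 p.2.2 / pd e3 (fun p : E3 => ((us p.1 p.2.2 : ℝ) : ℂ)) p)) (t,x,z'')) z = pd e3 (pd e3 (pd e3 (fun p : E3 => uk p.1 p.2.1 p.2.2 / pd e3 (fun p : E3 => ((us p.1 p.2.2 : ℝ) : ℂ)) p))) (t,x,z) from
        deriv_p3 (Dc (pd_contDiff hHHc e3) (t,x,z)),
      show (fun t' => hk t' x z) = (fun t' => (pd e3 (fun p : E3 => uk p.1 p.2.1 p.2.2 / pd e3 (fun p : E3 => ((us p.1 p.2.2 : ℝ) : ℂ)) p)) (t',x,z)) from funext fun t' => hkH t' x z,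
      show deriv (fun t' => (pd e3 (fun p : E3 => uk p.1 p.2.1 p.2.2 / pd e3 (fun p : E3 => ((us p.1 p.2.2 : ℝ) : ℂ)) p)) (t',x,z)) t = pd e1 (pd e3 (fun p : E3 => uk p.1 p.2.1 p.2.2 / pd e3 (fun p : E3 => ((us p.1 p.2.2 : ℝ) : ℂ)) p)) (t,x,z) from
        deriv_p1 (Dc hHHc (t,x,z)),
      show (fun x' => hk t x' z) = (fun x' => (pd e3 (fun p : E3 => uk p.1 p.2.1 p.2.2 / pd e3 (fun p : E3 => ((us p.1 p.2.2 : ℝ) : ℂ)) p)) (t,x',z)) from funext fun x' => hkH t x' z,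
      show deriv (fun x' => (pd e3 (fun p : E3 => uk p.1 p.2.1 p.2.2 / pd e3 (fun p : E3 => ((us p.1 p.2.2 : ℝ) : ℂ)) p)) (t,x',z)) x = pd e2 (pd e3 (fun p : E3 => uk p.1 p.2.1 p.2.2 / pd e3 (fun p : E3 => ((us p.1 p.2.2 : ℝ) : ℂ)) p)) (t,x,z) from
        deriv_p2 (Dc hHHc (t,x,z)),
      hvtVt t x z]
    exact main.1
  · rw [br_C t x z, hkH t x z, hvtVt t x z,
      show vt t x = (fun z' => (fun p : E3 => vk p.1 p.2.1 p.2.2 - pd e3 (fun p : E3 => ((vs p.1 p.2.2 : ℝ) : ℂ)) p / pd e3 (fun p : E3 => ((us p.1 p.2.2 : ℝ) : ℂ)) p * uk p.1 p.2.1 p.2.2) (t,x,z')) from funext fun z' => hvtVt t x z',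
      show deriv (fun z' => (fun p : E3 => vk p.1 p.2.1 p.2.2 - pd e3 (fun p : E3 => ((vs p.1 p.2.2 : ℝ) : ℂ)) p / pd e3 (fun p : E3 => ((us p.1 p.2.2 : ℝ) : ℂ)) p * uk p.1 p.2.1 p.2.2) (t,x,z')) = (fun z'' => pd e3 (fun p : E3 => vk p.1 p.2.1 p.2.2 - pd e3 (fun p : E3 => ((vs p.1 p.2.2 : ℝ) : ℂ)) p / pd e3 (fun p : E3 => ((us p.1 p.2.2 : ℝ) : ℂ)) p * uk p.1 p.2.1 p.2.2) (t,x,z'')) from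
        funext fun z'' => deriv_p3 (Dc hVTc (t,x,z'')),
      show deriv (fun z'' => pd e3 (fun p : E3 => vk p.1 p.2.1 p.2.2 - pd e3 (fun p : E3 => ((vs p.1 p.2.2 : ℝ) : ℂ)) p / pd e3 (fun p : E3 => ((us p.1 p.2.2 : ℝ) : ℂ)) p * uk p.1 p.2.1 p.2.2) (t,x,z'')) z = pd e3 (pd e3 (fun p : E3 => vk p.1 p.2.1 p.2.2 - pd e3 (fun p : E3 => ((vs p.1 p.2.2 : ℝ) : ℂ)) p / pd e3 (fun p : E3 => ((us p.1 p.2.2 : ℝ) : ℂ)) p * uk p.1 p.2.1 p.2.2)) (t,x,z) from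
        deriv_p3 (Dc (pd_contDiff hVTc e3) (t,x,z)),
      show (fun t' => vt t' x z) = (fun t' => (fun p : E3 => vk p.1 p.2.1 p.2.2 - pd e3 (fun p : E3 => ((vs p.1 p.2.2 : ℝ) : ℂ)) p / pd e3 (fun p : E3 => ((us p.1 p.2.2 : ℝ) : ℂ)) p * uk p.1 p.2.1 p.2.2) (t',x,z)) from funext fun t' => hvtVt t' x z,
      show deriv (fun t' => (fun p : E3 => vk p.1 p.2.1 p.2.2 - pd e3 (fun p : E3 => ((vs p.1 p.2.2 : ℝ) : ℂ)) p / pd e3 (fun p : E3 => ((us p.1 p.2.2 : ℝ) : ℂ)) p * uk p.1 p.2.1 p.2.2) (t',x,z)) t = pd e1 (fun p : E3 => vk p.1 p.2.1 p.2.2 - pd e3 (fun p : E3 => ((vs p.1 p.2.2 : ℝ) : ℂ)) p / pd e3 (fun p : E3 => ((us p.1 p.2.2 : ℝ) : ℂ)) p * uk p.1 p.2.1 p.2.2) (t,x,z) from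
        deriv_p1 (Dc hVTc (t,x,z)),
      show (fun x' => vt t x' z) = (fun x' => (fun p : E3 => vk p.1 p.2.1 p.2.2 - pd e3 (fun p : E3 => ((vs p.1 p.2.2 : ℝ) : ℂ)) p / pd e3 (fun p : E3 => ((us p.1 p.2.2 : ℝ) : ℂ)) p * uk p.1 p.2.1 p.2.2) (t,x',z)) from funext fun x' => hvtVt t x' z,
      show deriv (fun x' => (fun p : E3 => vk p.1 p.2.1 p.2.2 - pd e3 (fun p : E3 => ((vs p.1 p.2.2 : ℝ) : ℂ)) p / pd e3 (fun p : E3 => ((us p.1 p.2.2 : ℝ) : ℂ)) p * uk p.1 p.2.1 p.2.2) (t,x',z)) x = pd e2 (fun p : E3 => vk p.1 p.2.1 p.2.2 - pd e3 (fun p : E3 => ((vs p.1 p.2.2 : ℝ) : ℂ)) p / pd e3 (fun p : E3 => ((us p.1 p.2.2 : ℝ) : ℂ)) p * uk p.1 p.2.1 p.2.2) (t,x,z) from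
        deriv_p2 (Dc hVTc (t,x,z)),
      br_us1 t x z]
    exact main.2
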